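/- arXiv:2305.11110 — 3 statements merged into one kernel-verified Lean document; each statement's English description precedes it below -/
import Mathlib

section
/- Let P be the uniform probability measure on the segment {(x,0) : 0 ≤ x ≤ 2} ⊂ ℝ², and let the constraint be the segment of the line y = 1 between (0,1) and (28/15, 1). Then for 1 ≤ n ≤ 7, the set α_n = {((2i−1)/n, 1) : 1 ≤ i ≤ n} is an optimal set of n points; and for every n ≥ 8, the set α_n = {(a_i,1) : 1 ≤ i ≤ n} with a_i = 28(2i−1)/(15(2n−1)) for 1 ≤ i ≤ n−1 and a_n = 28/15 is an optimal set of n points, with nth constrained quantization error V_n = 7(5788(n−1)n + 3015)/(10125(1−2n)²). -/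
open MeasureTheory Real Set

noncomputable section

abbrev E2 : Type := EuclideanSpace ℝ (Fin 2)

/-- The point `(x, y)` of the Euclidean plane. -/
def cpt (x y : ℝ) : E2 := WithLp.toLp 2 ![x, y]

/-- Distortion error of `P` with respect to the set `α`: `∫ min_{a ∈ α} ‖x - a‖² dP(x)`. -/
def cDistortion (P : Measure E2) (α : Set E2) : ℝ :=
  ∫ x, (⨅ a : α, dist x (a : E2) ^ 2) ∂P

/-- The `n`th constrained quantization error of `P` with constraint set `S`. -/
def cqError (P : Measure E2) (S : Set E2) (n : ℕ) : ℝ :=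
  sInf {v : ℝ | ∃ α : Set E2, α ⊆ S ∧ α.Finite ∧ 1 ≤ α.ncard ∧ α.ncard ≤ n ∧
    v = cDistortion P α}

/-- `α` is an optimal set of `n` points for `P` with constraint `S`: it is an admissible set
attaining the `n`th constrained quantization error. -/
def IsOptimalNSet (P : Measure E2) (S : Set E2) (n : ℕ) (α : Set E2) : Prop :=
  α ⊆ S ∧ α.Finite ∧ 1 ≤ α.ncard ∧ α.ncard ≤ n ∧ cDistortion P α = cqError P S n

/-- The uniform probability distribution on the interval `[a, b]`. -/
def uniformIccM (a b : ℝ) : Measure ℝ :=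
  (ENNReal.ofReal (b - a))⁻¹ • volume.restrict (Icc a b)

/-- The point of the line `y = m x + c` with abscissa `t`. -/
def segPt (m c t : ℝ) : E2 := cpt t (m * t + c)

/-!
Since `‖(x, 0) - (t, y)‖² = (x - t)² + y²`, the distortion of a set of points `(t, y)` with
abscissas in `T` is `y² + (1/L) ∫₀ᴸ min_{t ∈ T} (x - t)² dx`: the problem is one-dimensional
quantization of the uniform distribution on `[0, L]` with points constrained to `[0, c]`.
Splitting off the leftmost Voronoi cell, an induction on the number of points bounds
`∫ᵤᴸ min_{t ∈ T} (x - t)² dx` from below by `quantCost (L - c) (L - u) #T`: the cost of the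
evenly spaced configuration if it fits into `[u, c]`, and otherwise that of the configuration
whose last point sits at `c` and whose other points are evenly spaced to its left. The given
sets attain this bound.
-/

open Metric

/-- Cost `∫₀^ℓ min_i (x - tᵢ)² dx` of `n` evenly spaced points on an interval of length `ℓ`. -/
def uniformCost (ℓ n : ℝ) : ℝ := ℓ ^ 3 / (12 * n ^ 2)

/-- Cost of `n` points on an interval of length `ℓ` whose last point is pushed back to
distance `e` from the right end and whose other points are evenly spaced on the rest. -/
def edgeCost (e ℓ n : ℝ) : ℝ := (ℓ - e) ^ 3 / (3 * (2 * n - 1) ^ 2) + e ^ 3 / 3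

/-- The least cost of `n` points on `[0, ℓ]` constrained to `[0, ℓ - e]`: the evenly spaced
configuration is admissible exactly when `2 n e ≤ ℓ`. -/
def quantCost (e ℓ : ℝ) (n : ℕ) : ℝ :=
  if 2 * n * e ≤ ℓ then uniformCost ℓ n else edgeCost e ℓ n

lemma add_pow_three_div_four_le {a b : ℝ} (ha : 0 ≤ a) (hb : 0 ≤ b) :
    (a + b) ^ 3 / 4 ≤ a ^ 3 + b ^ 3 := by
  nlinarith [mul_nonneg (add_nonneg ha hb) (sq_nonneg (a - b))]

lemma uniformCost_add_le {j p q : ℝ} (hj : 1 ≤ j) (hp : 0 ≤ p) (hq : 0 ≤ q) :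
    uniformCost (p + q) (j + 1) ≤ uniformCost p 1 + uniformCost q j := by
  simp only [uniformCost]
  rw [div_add_div _ _ (by norm_num) (by positivity),
    div_le_div_iff₀ (by positivity) (by positivity)]
  have hlin : 0 ≤ (2 * j + 1) * q + j * (j + 2) * p := by positivity
  nlinarith [mul_nonneg (sq_nonneg (q - j * p)) hlin, sq_nonneg (q - j * p)]

lemma edgeCost_add_le {e j p q : ℝ} (hj : 1 ≤ j) (hp : 0 ≤ p) (hq : 0 ≤ q) :
    edgeCost e (p + q + e) (j + 1) ≤ uniformCost p 1 + edgeCost e (q + e) j := by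
  simp only [edgeCost, uniformCost]
  suffices h : (p + q) ^ 3 / (3 * ((2 * j - 1) + 2) ^ 2)
      ≤ p ^ 3 / 12 + q ^ 3 / (3 * (2 * j - 1) ^ 2) by
    ring_nf at h ⊢; linarith
  have hk : 1 ≤ 2 * j - 1 := by linarith
  generalize 2 * j - 1 = k at hk ⊢
  rw [div_add_div _ _ (by norm_num) (by positivity),
    div_le_div_iff₀ (by positivity) (by positivity)]
  have hlin : 0 ≤ 4 * (k + 1) * q + k * (k + 4) * p := by positivity
  nlinarith [mul_nonneg (sq_nonneg (2 * q - k * p)) hlin]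

lemma uniformCost_le_edgeCost {e j r : ℝ} (hj : 1 ≤ j) (he : 0 ≤ e) (hr : 0 ≤ r) :
    uniformCost (r + e) j ≤ edgeCost e (r + e) j := by
  simp only [edgeCost, uniformCost, add_sub_cancel_right]
  have hd : 0 < 3 * (2 * j - 1) ^ 2 := by nlinarith
  rw [div_add_div _ _ hd.ne' (by norm_num), div_le_div_iff₀ (by positivity) (by positivity)]
  have hlin : 0 ≤ (4 * j - 1) * r + (4 * j ^ 2 - 1) * e := by nlinarith
  nlinarith [mul_nonneg (sq_nonneg (r - (2 * j - 1) * e)) hlin]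

/-- The case where `j + 1` evenly spaced points do not fit but `j` do. The intermediate quantity
`(ρ³ + 8 j e³) / 12` is the cost of one cell of width `ρ` and `j` cells of width `2e`. -/
lemma edgeCost_succ_le_uniformCost {e j p w : ℝ} (hj : 1 ≤ j) (he : 0 ≤ e) (hp : 0 ≤ p)
    (hw : 0 ≤ w) (hpw : p + w ≤ 2 * e) :
    edgeCost e (p + w + 2 * j * e) (j + 1)
      ≤ uniformCost p 1 + uniformCost (w + 2 * j * e) j := by
  simp only [edgeCost, uniformCost]
  have hmerge : (p + w) ^ 3 / 12 + 2 * j * e ^ 3 / 3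
      ≤ p ^ 3 / 12 + (2 * j * e + w) ^ 3 / (12 * j ^ 2) := by
    rw [div_add_div _ _ (by norm_num : (12 : ℝ) ≠ 0) (by norm_num : (3 : ℝ) ≠ 0),
      div_add_div _ _ (by norm_num : (12 : ℝ) ≠ 0) (by positivity),
      div_le_div_iff₀ (by positivity) (by positivity)]
    have hk : 0 ≤ 12 * e ^ 2 - (3 * p ^ 2 + 3 * p * w + w ^ 2) := by
      nlinarith [mul_nonneg hp hw]
    nlinarith [mul_nonneg (mul_nonneg (sq_nonneg j) hw) hk,
      mul_nonneg (mul_nonneg (by linarith : (0 : ℝ) ≤ j) hw) hw, mul_nonneg hw (mul_nonneg hw hw),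
      mul_nonneg (mul_nonneg (sub_nonneg.2 hj) hw) hw]
  have hpush : (p + w + (2 * j - 1) * e) ^ 3 / (3 * (2 * j + 1) ^ 2) + e ^ 3 / 3
      ≤ (p + w) ^ 3 / 12 + 2 * j * e ^ 3 / 3 := by
    have hρ : 0 ≤ p + w := add_nonneg hp hw
    generalize p + w = ρ at hρ ⊢
    rw [div_add_div _ _ (by positivity : (3 : ℝ) * (2 * j + 1) ^ 2 ≠ 0)
        (by norm_num : (3 : ℝ) ≠ 0),
      div_add_div _ _ (by norm_num : (12 : ℝ) ≠ 0) (by norm_num : (3 : ℝ) ≠ 0),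
      div_le_div_iff₀ (by positivity) (by positivity)]
    have hj₁ : 0 ≤ 2 * j - 1 := by linarith
    have hlin : 0 ≤ (2 * j - 1) * (2 * j + 3) * ρ + (2 * j - 1) * (8 * j) * e :=
      add_nonneg (mul_nonneg (mul_nonneg hj₁ (by linarith)) hρ)
        (mul_nonneg (mul_nonneg hj₁ (by linarith)) he)
    nlinarith [mul_nonneg (sq_nonneg (ρ - 2 * e)) hlin]
  rw [show p + w + 2 * j * e - e = p + w + (2 * j - 1) * e by ring,
    show 2 * (j + 1) - 1 = 2 * j + 1 by ring, one_pow, mul_one, add_comm w]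
  linarith

lemma quantCost_one_le {e ℓ t : ℝ} (he : 0 ≤ e) (ht₀ : 0 ≤ t) (ht : t ≤ ℓ - e) :
    quantCost e ℓ 1 ≤ ((ℓ - t) ^ 3 + t ^ 3) / 3 := by
  unfold quantCost uniformCost edgeCost
  split_ifs with h
  · have := add_pow_three_div_four_le (a := ℓ - t) (b := t) (by linarith) ht₀
    rw [sub_add_cancel] at this
    norm_num
    linarith
  · norm_num at h ⊢
    nlinarith [mul_nonneg (mul_nonneg (by linarith : (0 : ℝ) ≤ ℓ) (sub_nonneg.2 ht))
      (by linarith : (0 : ℝ) ≤ e - t)]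

/-- Splitting off the first cell, of width `p`, of a configuration of `j + 1` points. -/
lemma quantCost_succ_le {e ℓ p : ℝ} {j : ℕ} (he : 0 ≤ e) (hj : 1 ≤ j) (hp : 0 ≤ p)
    (hpℓ : p ≤ ℓ - e) :
    quantCost e ℓ (j + 1) ≤ uniformCost p 1 + quantCost e (ℓ - p) j := by
  have hj' : (1 : ℝ) ≤ j := by exact_mod_cast hj
  unfold quantCost
  push_cast
  split_ifs with hu hm hm
  · simpa using uniformCost_add_le hj' hp (q := ℓ - p) (by linarith)
  · have h₁ := uniformCost_add_le hj' hp (q := ℓ - p) (by linarith)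
    have h₂ := uniformCost_le_edgeCost hj' he (r := ℓ - p - e) (by linarith)
    simp only [sub_add_cancel, add_sub_cancel] at h₁ h₂
    linarith
  · have h := edgeCost_succ_le_uniformCost hj' he hp (w := ℓ - p - 2 * j * e) (by linarith)
      (by linarith)
    convert h using 3 <;> ring
  · have h := edgeCost_add_le (e := e) hj' hp (q := ℓ - p - e) (by linarith)
    convert h using 3 <;> ring

lemma integral_sub_sq (a b t : ℝ) :
    ∫ x in a..b, (x - t) ^ 2 = ((b - t) ^ 3 - (a - t) ^ 3) / 3 := by
  rw [intervalIntegral.integral_comp_sub_right (fun x => x ^ 2), integral_pow]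
  ring

lemma uniformCost_one_le_integral {a b t : ℝ} (hat : a ≤ t) (htb : t ≤ b) :
    uniformCost (b - a) 1 ≤ ∫ x in a..b, (x - t) ^ 2 := by
  have h := add_pow_three_div_four_le (sub_nonneg.2 htb) (sub_nonneg.2 hat)
  rw [integral_sub_sq, uniformCost]
  nlinarith [h]

lemma infDist_sq_le {T : Set ℝ} {t : ℝ} (ht : t ∈ T) (x : ℝ) :
    infDist x T ^ 2 ≤ (x - t) ^ 2 := by
  rw [← sq_abs (x - t), ← Real.dist_eq]
  exact pow_le_pow_left₀ infDist_nonneg (infDist_le_dist_of_mem ht) 2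

lemma exists_infDist_sq_eq {T : Set ℝ} (hT : T.Finite) (hne : T.Nonempty) (x : ℝ) :
    ∃ t ∈ T, infDist x T ^ 2 = (x - t) ^ 2 := by
  obtain ⟨t, ht, hdist⟩ := hT.isCompact.exists_infDist_eq_dist hne x
  exact ⟨t, ht, by rw [hdist, Real.dist_eq, sq_abs]⟩

lemma intervalIntegrable_infDist_sq (T : Set ℝ) (a b : ℝ) :
    IntervalIntegrable (fun x => infDist x T ^ 2) volume a b :=
  ((continuous_infDist_pt T).pow 2).intervalIntegrable a b

lemma intervalIntegrable_sub_sq (t a b : ℝ) :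
    IntervalIntegrable (fun x => (x - t) ^ 2) volume a b :=
  (by fun_prop : Continuous fun x : ℝ => (x - t) ^ 2).intervalIntegrable a b

/-- The Voronoi cell of the leftmost point `a` of `insert a T` ends at the midpoint of `a` and
the least point `t₀` of `T`. -/
lemma integral_infDist_sq_insert_ge {T : Set ℝ} (hT : T.Finite) {a t₀ u b : ℝ} (ht₀ : t₀ ∈ T)
    (hmin : ∀ t ∈ T, t₀ ≤ t) (hat₀ : a ≤ t₀) (hu : u ≤ (a + t₀) / 2)
    (hb : (a + t₀) / 2 ≤ b) :
    (∫ x in u..(a + t₀) / 2, (x - a) ^ 2) + ∫ x in (a + t₀) / 2..b, infDist x T ^ 2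
      ≤ ∫ x in u..b, infDist x (insert a T) ^ 2 := by
  rw [← intervalIntegral.integral_add_adjacent_intervals (b := (a + t₀) / 2)
    (intervalIntegrable_infDist_sq _ u _) (intervalIntegrable_infDist_sq _ _ b)]
  apply add_le_add
  · refine intervalIntegral.integral_mono_on hu (intervalIntegrable_sub_sq _ _ _)
      (intervalIntegrable_infDist_sq _ _ _) fun x hx => ?_
    obtain ⟨t, ht, heq⟩ := exists_infDist_sq_eq (hT.insert a) (insert_nonempty a T) x
    rw [heq]
    rcases ht with rfl | ht
    · rfl
    · nlinarith [hmin t ht, hx.2]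
  · refine intervalIntegral.integral_mono_on hb (intervalIntegrable_infDist_sq _ _ _)
      (intervalIntegrable_infDist_sq _ _ _) fun x hx => ?_
    obtain ⟨t, ht, heq⟩ := exists_infDist_sq_eq (hT.insert a) (insert_nonempty a T) x
    rw [heq]
    rcases ht with rfl | ht
    · exact (infDist_sq_le ht₀ x).trans (by nlinarith [hx.1])
    · exact infDist_sq_le ht x

theorem quantCost_le_integral_infDist_sq {e b : ℝ} (he : 0 ≤ e) (T : Finset ℝ) :
    ∀ {u : ℝ}, T.Nonempty → (∀ t ∈ T, u ≤ t ∧ t ≤ b - e) →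
      quantCost e (b - u) T.card ≤ ∫ x in u..b, infDist x (T : Set ℝ) ^ 2 := by
  induction T using Finset.induction_on_min with
  | empty => simp
  | insert a s has ih =>
    intro u _ hmem
    obtain ⟨hua, hab⟩ := hmem a (Finset.mem_insert_self a s)
    rw [Finset.card_insert_of_notMem fun h => lt_irrefl a (has a h), Finset.coe_insert]
    rcases s.eq_empty_or_nonempty with rfl | hs
    · simp only [Finset.coe_empty, insert_empty_eq, infDist_singleton, Real.dist_eq, sq_abs,
        integral_sub_sq]
      have := quantCost_one_le he (sub_nonneg.2 hua) (t := a - u) (ℓ := b - u) (by linarith)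
      convert this using 2
      · simp
      · ring
    set t₀ := s.min' hs
    have ht₀ : t₀ ∈ s := s.min'_mem hs
    have hat₀ := has t₀ ht₀
    have ht₀b := (hmem t₀ (Finset.mem_insert_of_mem ht₀)).2
    have hIH := ih hs (u := (a + t₀) / 2) fun t ht =>
      ⟨by linarith [s.min'_le t ht], (hmem t (Finset.mem_insert_of_mem ht)).2⟩
    have hcell := uniformCost_one_le_integral (b := (a + t₀) / 2) hua (by linarith)
    have hstep := quantCost_succ_le he (Finset.card_pos.2 hs) (ℓ := b - u)
      (p := (a + t₀) / 2 - u) (by linarith) (by linarith)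
    rw [sub_sub_sub_cancel_right] at hstep
    have hpeel := integral_infDist_sq_insert_ge s.finite_toSet (Finset.mem_coe.2 ht₀)
      (fun t ht => s.min'_le t ht) hat₀.le (u := u) (b := b) (by linarith) (by linarith)
    linarith

lemma integral_infDist_sq_le_of_evenlySpaced {T : Set ℝ} {h : ℝ} (hh : 0 ≤ h) {k : ℕ}
    (hT : ∀ i < k, (2 * i + 1) * h ∈ T) :
    ∫ x in 0..2 * k * h, infDist x T ^ 2 ≤ k * (2 * h ^ 3 / 3) := by
  have hsplit := intervalIntegral.sum_integral_adjacent_intervals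
    (a := fun i : ℕ => 2 * i * h) (n := k) fun i _ => intervalIntegrable_infDist_sq T _ _
  simp only [Nat.cast_zero, mul_zero, zero_mul] at hsplit
  calc ∫ x in 0..2 * k * h, infDist x T ^ 2
      = ∑ i ∈ Finset.range k, ∫ x in 2 * i * h..2 * (i + 1 : ℕ) * h, infDist x T ^ 2 :=
        hsplit.symm
    _ ≤ ∑ i ∈ Finset.range k,
          ∫ x in 2 * i * h..2 * (i + 1 : ℕ) * h, (x - (2 * i + 1) * h) ^ 2 := by
      refine Finset.sum_le_sum fun i hi => intervalIntegral.integral_mono_on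
        (by push_cast; nlinarith) (intervalIntegrable_infDist_sq T _ _)
        (intervalIntegrable_sub_sq _ _ _) fun x _ => ?_
      exact infDist_sq_le (hT i (Finset.mem_range.1 hi)) x
    _ = k * (2 * h ^ 3 / 3) := by
      simp only [integral_sub_sq]
      push_cast
      simp only [show ∀ i : ℝ, ((2 * (i + 1) * h - (2 * i + 1) * h) ^ 3
          - (2 * i * h - (2 * i + 1) * h) ^ 3) / 3 = 2 * h ^ 3 / 3 from fun i => by ring,
        Finset.sum_const, Finset.card_range, nsmul_eq_mul]

lemma integral_infDist_sq_le_uniformCost {T : Set ℝ} {ℓ : ℝ} (hℓ : 0 ≤ ℓ) {n : ℕ}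
    (hn : 0 < n) (hT : ∀ i < n, (2 * i + 1) * (ℓ / (2 * n)) ∈ T) :
    ∫ x in 0..ℓ, infDist x T ^ 2 ≤ uniformCost ℓ n := by
  have hn' : (0 : ℝ) < n := Nat.cast_pos.2 hn
  have h := integral_infDist_sq_le_of_evenlySpaced (by positivity) hT
  rw [show 2 * (n : ℝ) * (ℓ / (2 * n)) = ℓ by field_simp] at h
  refine h.trans_eq ?_
  rw [uniformCost]
  field_simp
  ring

lemma integral_infDist_sq_le_edgeCost {T : Set ℝ} {e ℓ : ℝ} (he : 0 ≤ e) (heℓ : e ≤ ℓ) {k : ℕ}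
    (hT : ∀ i < k, (2 * i + 1) * ((ℓ - e) / (2 * k + 1)) ∈ T) (hlast : ℓ - e ∈ T) :
    ∫ x in 0..ℓ, infDist x T ^ 2 ≤ edgeCost e ℓ (k + 1) := by
  set h := (ℓ - e) / (2 * k + 1) with hh
  have hℓ : ℓ - e = (2 * k + 1) * h := by rw [hh]; field_simp
  have h0 : 0 ≤ h := by positivity
  have hfirst := integral_infDist_sq_le_of_evenlySpaced h0 hT
  have hlastCell : ∫ x in 2 * k * h..ℓ, infDist x T ^ 2
      ≤ ∫ x in 2 * k * h..ℓ, (x - (ℓ - e)) ^ 2 :=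
    intervalIntegral.integral_mono_on (by nlinarith) (intervalIntegrable_infDist_sq T _ _)
      (intervalIntegrable_sub_sq _ _ _) fun x _ => infDist_sq_le hlast x
  rw [← intervalIntegral.integral_add_adjacent_intervals (intervalIntegrable_infDist_sq T _ _)
    (intervalIntegrable_infDist_sq T _ _)]
  refine (add_le_add hfirst hlastCell).trans_eq ?_
  rw [integral_sub_sq, edgeCost]
  clear_value h
  obtain rfl : ℓ = (2 * k + 1) * h + e := by linarith
  rw [show 2 * ((k : ℝ) + 1) - 1 = 2 * k + 1 by ring]
  field_simp
  ring

lemma integral_uniformIccM {a b : ℝ} (hab : a ≤ b) (f : ℝ → ℝ) :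
    ∫ x, f x ∂uniformIccM a b = (b - a)⁻¹ * ∫ x in a..b, f x := by
  rw [uniformIccM, integral_smul_measure, ENNReal.toReal_inv,
    ENNReal.toReal_ofReal (sub_nonneg.2 hab), integral_Icc_eq_integral_Ioc,
    intervalIntegral.integral_of_le hab, smul_eq_mul]

lemma dist_cpt_sq (x y x' y' : ℝ) :
    dist (cpt x y) (cpt x' y') ^ 2 = (x - x') ^ 2 + (y - y') ^ 2 := by
  rw [EuclideanSpace.dist_eq, sq_sqrt (by positivity), Fin.sum_univ_two]
  simp [cpt, Real.dist_eq, sq_abs]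

lemma isometry_cpt (y : ℝ) : Isometry fun x => cpt x y :=
  Isometry.of_dist_eq fun x x' => by
    rw [← sq_eq_sq₀ dist_nonneg dist_nonneg, dist_cpt_sq, Real.dist_eq, sq_abs]
    ring

lemma cpt_injective (y : ℝ) : Function.Injective fun x => cpt x y :=
  (isometry_cpt y).injective

lemma segment_cpt {c : ℝ} (hc : 0 ≤ c) (y : ℝ) :
    segment ℝ (cpt 0 y) (cpt c y) = (fun t => cpt t y) '' Icc 0 c := by
  let f : ℝ →ᵃ[ℝ] E2 := AffineMap.lineMap (cpt 0 y) (cpt 1 y)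
  have hf : ∀ t, f t = cpt t y := fun t => by
    ext i
    fin_cases i <;> simp [f, AffineMap.lineMap_apply, cpt]
  rw [← segment_eq_Icc hc, ← funext hf, image_segment, hf, hf]

lemma iInf_dist_cpt_sq {T : Set ℝ} (hT : T.Finite) (hne : T.Nonempty) (x y : ℝ) :
    ⨅ a : (fun t => cpt t y) '' T, dist (cpt x 0) a ^ 2 = infDist x T ^ 2 + y ^ 2 := by
  have hdist : ∀ t, dist (cpt x 0) (cpt t y) ^ 2 = (x - t) ^ 2 + y ^ 2 := fun t => by
    rw [dist_cpt_sq]; ring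
  obtain ⟨t₀, ht₀, heq⟩ := exists_infDist_sq_eq hT hne x
  have : Nonempty ((fun t => cpt t y) '' T) := (hne.image _).to_subtype
  refine le_antisymm ?_ (le_ciInf ?_)
  · refine (ciInf_le ⟨0, ?_⟩ ⟨_, t₀, ht₀, rfl⟩).trans (by rw [hdist, heq])
    rintro _ ⟨a, rfl⟩
    positivity
  · rintro ⟨_, t, ht, rfl⟩
    rw [hdist]
    exact add_le_add_left (infDist_sq_le ht x) _

theorem cDistortion_map_cpt {L : ℝ} (hL : 0 < L) {T : Set ℝ} (hT : T.Finite)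
    (hne : T.Nonempty) (y : ℝ) :
    cDistortion (Measure.map (fun x : ℝ => cpt x 0) (uniformIccM 0 L)) ((fun t => cpt t y) '' T)
      = y ^ 2 + (∫ x in 0..L, infDist x T ^ 2) / L := by
  rw [cDistortion, (isometry_cpt 0).isClosedEmbedding.measurableEmbedding.integral_map]
  simp only [iInf_dist_cpt_sq hT hne]
  rw [integral_uniformIccM hL.le,
    intervalIntegral.integral_add (intervalIntegrable_infDist_sq _ _ _) intervalIntegrable_const,
    intervalIntegral.integral_const, smul_eq_mul, sub_zero]
  field_simp [hL.ne']
  ring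

lemma isOptimalNSet_of_forall_le {P : Measure E2} {S α : Set E2} {n : ℕ} (hαS : α ⊆ S)
    (hα : α.Finite) (h1 : 1 ≤ α.ncard) (hn : α.ncard ≤ n)
    (hle : ∀ β ⊆ S, β.Finite → 1 ≤ β.ncard → β.ncard ≤ n →
      cDistortion P α ≤ cDistortion P β) :
    IsOptimalNSet P S n α ∧ cqError P S n = cDistortion P α := by
  have hcq : cqError P S n = cDistortion P α :=
    IsLeast.csInf_eq ⟨⟨α, hαS, hα, h1, hn, rfl⟩, by
      rintro _ ⟨β, hβS, hβ, hβ1, hβn, rfl⟩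
      exact hle β hβS hβ hβ1 hβn⟩
  exact ⟨⟨hαS, hα, h1, hn, hcq.symm⟩, hcq⟩

section Segment

variable {L c : ℝ}

/-- A set of at most `n` points of the segment is completed to exactly `n` points, which only
lowers the distortion. -/
theorem le_cDistortion_of_subset_segment (hL : 0 < L) (hc : 0 < c) (hcL : c ≤ L) (y : ℝ)
    {n : ℕ} {β : Set E2} (hβS : β ⊆ segment ℝ (cpt 0 y) (cpt c y)) (hβ : β.Finite)
    (h1 : 1 ≤ β.ncard) (hn : β.ncard ≤ n) :
    y ^ 2 + quantCost (L - c) L n / L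
      ≤ cDistortion (Measure.map (fun x : ℝ => cpt x 0) (uniformIccM 0 L)) β := by
  rw [segment_cpt hc.le] at hβS
  set T₀ := (fun t => cpt t y) ⁻¹' β
  have hβT₀ : (fun t => cpt t y) '' T₀ = β :=
    image_preimage_eq_of_subset (hβS.trans (image_subset_range _ _))
  have hT₀c : T₀ ⊆ Icc 0 c := fun t ht => by
    obtain ⟨s, hs, hst⟩ := hβS ht
    rwa [← cpt_injective y hst]
  have hT₀ : T₀.Finite := hβ.preimage (cpt_injective y).injOn
  have hT₀card : T₀.ncard = β.ncard := by
    rw [← hβT₀, ncard_image_of_injective _ (cpt_injective y)]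
  have hT₀ne : T₀.Nonempty := nonempty_of_ncard_ne_zero (by omega)
  obtain ⟨T₁, hT₀₁, hT₁c, hT₁n⟩ :=
    (Icc_infinite hc).exists_superset_ncard_eq hT₀c hT₀ (hT₀card.trans_le hn)
  lift T₁ to Finset ℝ using finite_of_ncard_pos (by omega)
  rw [ncard_coe_finset] at hT₁n
  have hlow := quantCost_le_integral_infDist_sq (b := L) (sub_nonneg.2 hcL) T₁ (u := 0)
    (Finset.card_pos.1 (by omega)) fun t ht => by simpa using hT₁c ht
  rw [hT₁n, sub_zero] at hlow
  have hmono : ∫ x in 0..L, infDist x (T₁ : Set ℝ) ^ 2 ≤ ∫ x in 0..L, infDist x T₀ ^ 2 :=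
    intervalIntegral.integral_mono_on hL.le (intervalIntegrable_infDist_sq _ _ _)
      (intervalIntegrable_infDist_sq _ _ _) fun x _ =>
        pow_le_pow_left₀ infDist_nonneg (infDist_le_infDist_of_subset hT₀₁ hT₀ne) 2
  rw [← hβT₀, cDistortion_map_cpt hL hT₀ hT₀ne]
  gcongr
  linarith

theorem isOptimalNSet_image_Icc (hL : 0 < L) (hc : 0 < c) (hcL : c ≤ L) (y : ℝ) {n : ℕ}
    (hn : 1 ≤ n) {g : ℕ → ℝ} (hg : ∀ i ∈ Icc 1 n, g i ∈ Icc 0 c)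
    (hint : ∫ x in 0..L, infDist x (g '' Icc 1 n) ^ 2 ≤ quantCost (L - c) L n) :
    IsOptimalNSet (Measure.map (fun x : ℝ => cpt x 0) (uniformIccM 0 L))
        (segment ℝ (cpt 0 y) (cpt c y)) n ((fun i : ℕ => cpt (g i) y) '' Icc 1 n) ∧
      cqError (Measure.map (fun x : ℝ => cpt x 0) (uniformIccM 0 L))
        (segment ℝ (cpt 0 y) (cpt c y)) n = y ^ 2 + quantCost (L - c) L n / L := by
  have hT : (g '' Icc 1 n).Finite := (finite_Icc 1 n).image g
  have hne : (g '' Icc 1 n).Nonempty := (nonempty_Icc.2 hn).image g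
  rw [← image_image (fun t => cpt t y)]
  have hαS : (fun t => cpt t y) '' (g '' Icc 1 n) ⊆ segment ℝ (cpt 0 y) (cpt c y) := by
    rw [segment_cpt hc.le]
    exact image_mono (image_subset_iff.2 hg)
  have hα : ((fun t => cpt t y) '' (g '' Icc 1 n)).Finite := hT.image _
  have h1 : 1 ≤ ((fun t => cpt t y) '' (g '' Icc 1 n)).ncard :=
    Nat.one_le_iff_ne_zero.2 ((ncard_pos hα).2 (hne.image _)).ne'
  have hcard : ((fun t => cpt t y) '' (g '' Icc 1 n)).ncard ≤ n :=
    (ncard_image_le hT).trans ((ncard_image_le (finite_Icc 1 n)).trans (by simp))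
  have hupper : cDistortion (Measure.map (fun x : ℝ => cpt x 0) (uniformIccM 0 L))
      ((fun t => cpt t y) '' (g '' Icc 1 n)) ≤ y ^ 2 + quantCost (L - c) L n / L := by
    rw [cDistortion_map_cpt hL hT hne]
    gcongr
  obtain ⟨hopt, hcq⟩ := isOptimalNSet_of_forall_le hαS hα h1 hcard fun β hβS hβ hβ1 hβn =>
    hupper.trans (le_cDistortion_of_subset_segment hL hc hcL y hβS hβ hβ1 hβn)
  exact ⟨hopt, hcq.trans
    (hupper.antisymm (le_cDistortion_of_subset_segment hL hc hcL y hαS hα h1 hcard))⟩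

theorem isOptimalNSet_evenlySpaced (hL : 0 < L) (hc : 0 < c) (hcL : c ≤ L) (y : ℝ) {n : ℕ}
    (hn : 1 ≤ n) (hgap : 2 * n * (L - c) ≤ L) :
    IsOptimalNSet (Measure.map (fun x : ℝ => cpt x 0) (uniformIccM 0 L))
      (segment ℝ (cpt 0 y) (cpt c y)) n
      ((fun i : ℕ => cpt ((2 * i - 1) * (L / (2 * n))) y) '' Icc 1 n) := by
  have hn' : (1 : ℝ) ≤ n := by exact_mod_cast hn
  have hh : 2 * n * (L / (2 * n)) = L := by field_simp
  have hh0 : 0 ≤ L / (2 * n) := by positivity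
  refine (isOptimalNSet_image_Icc hL hc hcL y hn (fun i hi => ?_) ?_).1
  · have hi1 : (1 : ℝ) ≤ i := by exact_mod_cast hi.1
    have hin : (i : ℝ) ≤ n := by exact_mod_cast hi.2
    constructor <;> nlinarith
  · rw [quantCost, if_pos hgap]
    refine integral_infDist_sq_le_uniformCost hL.le (by omega) fun i hi => ⟨i + 1, ?_, ?_⟩
    · simp only [mem_Icc]; omega
    · push_cast; ring

theorem isOptimalNSet_pushedBack (hL : 0 < L) (hc : 0 < c) (hcL : c ≤ L) (y : ℝ) {n : ℕ}
    (hn : 1 ≤ n) (hgap : L < 2 * n * (L - c)) :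
    IsOptimalNSet (Measure.map (fun x : ℝ => cpt x 0) (uniformIccM 0 L))
        (segment ℝ (cpt 0 y) (cpt c y)) n
        ((fun i : ℕ => cpt (if i = n then c else (2 * i - 1) * (c / (2 * n - 1))) y)
          '' Icc 1 n) ∧
      cqError (Measure.map (fun x : ℝ => cpt x 0) (uniformIccM 0 L))
        (segment ℝ (cpt 0 y) (cpt c y)) n = y ^ 2 + edgeCost (L - c) L n / L := by
  have hcost : quantCost (L - c) L n = edgeCost (L - c) L n := by
    rw [quantCost, if_neg (not_le.2 hgap)]
  rw [← hcost]
  obtain ⟨k, rfl⟩ := Nat.exists_eq_add_of_le' hn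
  have hk : 2 * ((k : ℝ) + 1) - 1 = 2 * k + 1 := by ring
  have hh0 : 0 ≤ c / (2 * k + 1) := by positivity
  refine isOptimalNSet_image_Icc hL hc hcL y hn (fun i hi => ?_) ?_
  · split_ifs with hik
    · exact ⟨hc.le, le_rfl⟩
    · have hi1 : (1 : ℝ) ≤ i := by exact_mod_cast hi.1
      have hik' : (i : ℝ) ≤ k := by
        exact_mod_cast (show i ≤ k by simp only [mem_Icc] at hi; omega)
      have hc' : (2 * k + 1) * (c / (2 * k + 1)) = c := by field_simp
      push_cast
      rw [hk]
      constructor <;> nlinarith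
  · rw [hcost, Nat.cast_succ]
    refine integral_infDist_sq_le_edgeCost (sub_nonneg.2 hcL) (by linarith)
      (fun i hi => ⟨i + 1, ?_, ?_⟩) ⟨k + 1, ?_, ?_⟩
    · simp only [mem_Icc]; omega
    · dsimp only
      rw [if_neg (by omega), hk, sub_sub_cancel]
      push_cast
      ring
    · simp
    · dsimp only
      rw [if_pos rfl, sub_sub_cancel]

end Segment

/-- For the uniform distribution `P` on `{(x,0) : 0 ≤ x ≤ 2}`, with constraint the segment of the
line `y = 1` joining `(0, 1)` and `(28/15, 1)`: for `1 ≤ n ≤ 7` the set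
`{((2i-1)/n, 1) : 1 ≤ i ≤ n}` is an optimal set of `n` points; and for every `n ≥ 8` the set
`{(aᵢ, 1) : 1 ≤ i ≤ n}` with `aᵢ = 28(2i-1)/(15(2n-1))` for `1 ≤ i ≤ n-1` and `aₙ = 28/15`
is an optimal set of `n` points, with `n`th constrained quantization error
`7(5788(n-1)n + 3015)/(10125(1-2n)²)`. -/
theorem optimal_sets_uniform_segment_line_y_eq_one_offset :
    (∀ n : ℕ, 1 ≤ n → n ≤ 7 →
      IsOptimalNSet (Measure.map (fun x : ℝ => cpt x 0) (uniformIccM 0 2))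
        (segment ℝ (cpt 0 1) (cpt (28/15) 1)) n
        ((fun i : ℕ => cpt ((2 * (i : ℝ) - 1) / (n : ℝ)) 1) '' Icc 1 n)) ∧
    ∀ n : ℕ, 8 ≤ n →
      IsOptimalNSet (Measure.map (fun x : ℝ => cpt x 0) (uniformIccM 0 2))
        (segment ℝ (cpt 0 1) (cpt (28/15) 1)) n
        ((fun i : ℕ => cpt
            (if i = n then 28/15
              else 28 * (2 * (i : ℝ) - 1) / (15 * (2 * (n : ℝ) - 1))) 1) '' Icc 1 n) ∧
      cqError (Measure.map (fun x : ℝ => cpt x 0) (uniformIccM 0 2))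
        (segment ℝ (cpt 0 1) (cpt (28/15) 1)) n =
        7 * (5788 * ((n : ℝ) - 1) * (n : ℝ) + 3015) / (10125 * (1 - 2 * (n : ℝ)) ^ 2) := by
  refine ⟨fun n hn1 hn7 => ?_, fun n hn8 => ?_⟩
  · have hn : (n : ℝ) ≤ 7 := by exact_mod_cast hn7
    convert isOptimalNSet_evenlySpaced (L := 2) (c := 28 / 15) (by norm_num) (by norm_num)
      (by norm_num) 1 hn1 (by linarith) using 4 with i
    field_simp
  · have hn : (8 : ℝ) ≤ n := by exact_mod_cast hn8
    have hn₁ : (2 * (n : ℝ) - 1) ≠ 0 := by linarith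
    obtain ⟨hopt, herr⟩ := isOptimalNSet_pushedBack (L := 2) (c := 28 / 15) (by norm_num)
      (by norm_num) (by norm_num) 1 (n := n) (by omega) (by linarith)
    refine ⟨?_, herr.trans ?_⟩
    · convert hopt using 4 with i
      field_simp
    · have : (1 - 2 * (n : ℝ)) ≠ 0 := by linarith
      rw [edgeCost]
      field_simp
      ring
end
end

section
/- Let P be the uniform probability measure on the unit circle in ℝ², let a > 0, and let the constraint be the concentric circle L of radius a. Then for every n ≥ 3, the set α_n = { (a cos((2i−1)π/n), a sin((2i−1)π/n)) : i = 1, …, n } is an optimal set of n points, and the nth constrained quantization error is V_n = a² + 1 − (2an/π)·sin(π/n). -/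
open MeasureTheory Real Set

noncomputable section

/-- The uniform probability distribution on the unit circle: the pushforward of the uniform
distribution on `[0, 2π]` under `t ↦ (cos t, sin t)`. -/
def circleUniform : Measure E2 :=
  Measure.map (fun t : ℝ => cpt (Real.cos t) (Real.sin t)) (uniformIccM 0 (2 * π))

def spt (a φ : ℝ) : E2 := cpt (a * Real.cos φ) (a * Real.sin φ)

lemma cpt_zero (x y : ℝ) : cpt x y 0 = x := rfl
lemma cpt_one (x y : ℝ) : cpt x y 1 = y := rfl

lemma dist_sq (a t φ : ℝ) :
    dist (cpt (Real.cos t) (Real.sin t)) (spt a φ) ^ 2 = a^2 + 1 - 2*a*Real.cos (t - φ) := by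
  rw [EuclideanSpace.dist_eq, Real.sq_sqrt (by positivity)]
  simp only [Fin.sum_univ_two, cpt_zero, cpt_one, spt, Real.dist_eq, sq_abs]
  have h1 := Real.sin_sq_add_cos_sq t
  have h2 := Real.sin_sq_add_cos_sq φ
  have h3 := Real.cos_sub t φ
  linear_combination h1 + a^2*h2 + 2*a*h3

lemma spt_mem_sphere (a φ : ℝ) (ha : 0 < a) : spt a φ ∈ Metric.sphere (0 : E2) a := by
  simp only [Metric.mem_sphere, dist_zero_right, EuclideanSpace.norm_eq]
  simp only [Fin.sum_univ_two, spt, cpt_zero, cpt_one, Real.norm_eq_abs, sq_abs]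
  rw [show (a * Real.cos φ)^2 + (a * Real.sin φ)^2 = a^2 by
    have := Real.sin_sq_add_cos_sq φ; nlinarith]
  exact Real.sqrt_sq ha.le

lemma mem_sphere_exists (a : ℝ) (ha : 0 < a) (p : E2) (hp : p ∈ Metric.sphere (0 : E2) a) :
    ∃ φ, p = spt a φ := by
  have hx : (p 0)^2 + (p 1)^2 = a^2 := by
    have : ‖p‖ = a := by simpa using hp
    rw [EuclideanSpace.norm_eq] at this
    have := congrArg (·^2) this
    simpa [Fin.sum_univ_two, Real.sq_sqrt (by positivity : (0:ℝ) ≤ (p 0)^2 + (p 1)^2)] using this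
  set z : ℂ := ⟨p 0, p 1⟩ with hz
  have hzabs : ‖z‖ = a := by
    rw [Complex.norm_def, Complex.normSq_apply]
    simp only [hz]
    rw [show (z.re * z.re + z.im * z.im) = (p 0)^2 + (p 1)^2 by simp [hz]; ring]
    rw [hx]; exact Real.sqrt_sq ha.le
  have hz0 : z ≠ 0 := by
    intro h; rw [h] at hzabs; simp at hzabs; exact ha.ne' hzabs.symm
  refine ⟨Complex.arg z, ?_⟩
  have hc := Complex.cos_arg hz0
  have hs := Complex.sin_arg z
  ext i
  fin_cases i
  · show p 0 = spt a _ 0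
    rw [spt, cpt_zero, hc, hzabs]
    field_simp
    rfl
  · show p 1 = spt a _ 1
    rw [spt, cpt_one, hs, hzabs]
    field_simp
    rfl


lemma cont_sup' {ι : Type*} (Φ : Finset ι) (h : Φ.Nonempty) {β : Type*} [TopologicalSpace β] (f : ι → β → ℝ)
    (hf : ∀ i, Continuous (f i)) : Continuous (fun t => Φ.sup' h (fun i => f i t)) := by
  induction h using Finset.Nonempty.cons_induction with
  | singleton i => simpa using hf i
  | cons i s hi hs ih =>
      rw [show (fun t => (Finset.cons i s hi).sup' (Finset.cons_nonempty hi) (fun j => f j t))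
        = fun t => (f i t) ⊔ (s.sup' hs (fun j => f j t)) from funext fun t => Finset.sup'_cons hs _]
      exact (hf i).sup ih

lemma cont_inf' {ι : Type*} (Φ : Finset ι) (h : Φ.Nonempty) {β : Type*} [TopologicalSpace β] (f : ι → β → ℝ)
    (hf : ∀ i, Continuous (f i)) : Continuous (fun t => Φ.inf' h (fun i => f i t)) := by
  induction h using Finset.Nonempty.cons_induction with
  | singleton i => simpa using hf i
  | cons i s hi hs ih =>
      rw [show (fun t => (Finset.cons i s hi).inf' (Finset.cons_nonempty hi) (fun j => f j t))
        = fun t => (f i t) ⊓ (s.inf' hs (fun j => f j t)) from funext fun t => Finset.inf'_cons hs _]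
      exact (hf i).inf ih

lemma iInf_image_eq_inf' {ι β : Type*} [TopologicalSpace β] (Φ : Finset ι) (h : Φ.Nonempty)
    (g : ι → β) (F : β → ℝ) (hF : ∀ x, 0 ≤ F x) :
    (⨅ p : (g '' (↑Φ : Set ι) : Set β), F p) = Φ.inf' h (fun i => F (g i)) := by
  have hne : (g '' (↑Φ : Set ι)).Nonempty := (h.to_set).image g
  haveI : Nonempty (g '' (↑Φ : Set ι) : Set β) := hne.to_subtype
  apply le_antisymm
  · obtain ⟨i, hi, hieq⟩ := Finset.exists_mem_eq_inf' h (fun i => F (g i))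
    rw [hieq]
    have hbdd : BddBelow (Set.range fun p : (g '' (↑Φ : Set ι) : Set β) => F ↑p) := by
      refine ⟨0, ?_⟩
      rintro x ⟨p, rfl⟩
      exact hF _
    exact ciInf_le hbdd ⟨g i, Set.mem_image_of_mem g hi⟩
  · refine le_ciInf fun ⟨p, hp⟩ => ?_
    obtain ⟨i, hi, rfl⟩ := hp
    exact Finset.inf'_le _ hi

lemma inf'_affine {ι : Type*} (Φ : Finset ι) (h : Φ.Nonempty) (C D : ℝ) (hD : 0 ≤ D)
    (f : ι → ℝ) : Φ.inf' h (fun i => C - D * f i) = C - D * Φ.sup' h f := by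
  apply le_antisymm
  · obtain ⟨i, hi, hieq⟩ := Finset.exists_mem_eq_sup' h f
    calc Φ.inf' h (fun i => C - D * f i) ≤ C - D * f i := Finset.inf'_le _ hi
    _ = C - D * Φ.sup' h f := by rw [hieq]
  · refine Finset.le_inf' _ _ fun i hi => ?_
    have := Finset.le_sup' f hi
    nlinarith






lemma cont_cpt : Continuous (fun t : ℝ => cpt (Real.cos t) (Real.sin t)) := by
  have h1 : Continuous fun t : ℝ => (![Real.cos t, Real.sin t] : Fin 2 → ℝ) := by
    refine continuous_pi fun i => ?_
    fin_cases i
    · simpa using Real.continuous_cos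
    · simpa using Real.continuous_sin
  exact (EuclideanSpace.equiv (Fin 2) ℝ).symm.continuous.comp h1

lemma integral_circleUniform (F : E2 → ℝ) (hF : Continuous F) :
    ∫ x, F x ∂circleUniform
      = (2*π)⁻¹ * ∫ t in (0:ℝ)..(2*π), F (cpt (Real.cos t) (Real.sin t)) := by
  rw [circleUniform, integral_map cont_cpt.aemeasurable hF.aestronglyMeasurable]
  rw [uniformIccM, integral_smul_measure]
  simp only [sub_zero]
  rw [MeasureTheory.integral_Icc_eq_integral_Ioc,
    ← intervalIntegral.integral_of_le (by positivity : (0:ℝ) ≤ 2*π)]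
  rw [ENNReal.toReal_inv, ENNReal.toReal_ofReal (by positivity)]
  simp [smul_eq_mul]

lemma distortion_formula (a : ℝ) (ha : 0 < a) (Φ : Finset ℝ) (hΦ : Φ.Nonempty) :
    cDistortion circleUniform (spt a '' (↑Φ : Set ℝ))
      = a^2 + 1 - (a/π) * ∫ t in (0:ℝ)..(2*π), Φ.sup' hΦ (fun φ => Real.cos (t - φ)) := by
  have hFeq : (fun x : E2 => ⨅ p : (spt a '' (↑Φ : Set ℝ) : Set E2), dist x (p:E2) ^ 2)
      = fun x => Φ.inf' hΦ (fun φ => dist x (spt a φ) ^ 2) := funext fun x =>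
    iInf_image_eq_inf' Φ hΦ (spt a) (fun p => dist x p ^ 2) (fun p => by positivity)
  have hcont : Continuous fun x : E2 => Φ.inf' hΦ (fun φ => dist x (spt a φ) ^ 2) :=
    cont_inf' Φ hΦ (fun φ x => dist x (spt a φ) ^ 2)
      (fun φ => (continuous_id.dist continuous_const).pow 2)
  rw [cDistortion, hFeq, integral_circleUniform _ hcont]
  have hMcont : Continuous fun t : ℝ => Φ.sup' hΦ (fun φ => Real.cos (t - φ)) :=
    cont_sup' Φ hΦ (fun φ t => Real.cos (t - φ))
      (fun φ => Real.continuous_cos.comp (continuous_id.sub continuous_const))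
  have hinner : (fun t : ℝ => Φ.inf' hΦ (fun φ => dist (cpt (Real.cos t) (Real.sin t)) (spt a φ) ^ 2))
      = fun t => (a^2 + 1) - (2*a) * Φ.sup' hΦ (fun φ => Real.cos (t - φ)) := by
    funext t
    rw [show (fun φ => dist (cpt (Real.cos t) (Real.sin t)) (spt a φ) ^ 2)
      = fun φ => (a^2+1) - (2*a) * Real.cos (t - φ) from funext fun φ => by
        rw [dist_sq]]
    exact inf'_affine Φ hΦ (a^2+1) (2*a) (by positivity) _
  rw [hinner]
  rw [intervalIntegral.integral_sub (intervalIntegrable_const)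
    (Continuous.intervalIntegrable (u := fun t => 2*a * Φ.sup' hΦ (fun φ => Real.cos (t - φ)))
      (continuous_const.mul hMcont) _ _),
    intervalIntegral.integral_const, intervalIntegral.integral_const_mul]
  have hπ : (π : ℝ) ≠ 0 := Real.pi_ne_zero
  field_simp
  ring


def gfun (c u : ℝ) : ℝ := max (Real.cos u - Real.cos c) 0

lemma gfun_cont (c : ℝ) : Continuous (gfun c) :=
  (Real.continuous_cos.sub continuous_const).max continuous_const

lemma gfun_nonneg (c u : ℝ) : 0 ≤ gfun c u := le_max_right _ _

lemma gfun_periodic (c : ℝ) : Function.Periodic (gfun c) (2*π) := by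
  intro u; simp [gfun, Real.cos_add_two_pi]

lemma cos_window (c v : ℝ) (hc : 0 < c) (hcπ : c ≤ π/2) (hv1 : c ≤ v) (hv2 : v ≤ 2*π - c) :
    Real.cos v ≤ Real.cos c := by
  have hπ := Real.pi_pos
  rcases le_or_gt v π with h | h
  · exact Real.cos_le_cos_of_nonneg_of_le_pi hc.le h hv1
  · rw [← Real.cos_two_pi_sub]
    exact Real.cos_le_cos_of_nonneg_of_le_pi hc.le (by linarith) (by linarith)

lemma cos_le_of_abs_le (c u : ℝ) (hc : 0 < c) (hcπ : c ≤ π/2) (hu : |u| ≤ c) :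
    Real.cos c ≤ Real.cos u := by
  rw [← Real.cos_abs u]
  exact Real.cos_le_cos_of_nonneg_of_le_pi (abs_nonneg u) (by linarith [Real.pi_pos]) hu

lemma gfun_integral (c : ℝ) (hc : 0 < c) (hcπ : c ≤ π/2) :
    ∫ u in (0:ℝ)..(2*π), gfun c u = 2*Real.sin c - 2*c*Real.cos c := by
  have hπ := Real.pi_pos
  have hint : ∀ t₁ t₂ : ℝ, IntervalIntegrable (gfun c) volume t₁ t₂ :=
    fun t₁ t₂ => (gfun_cont c).intervalIntegrable _ _
  have h1 : ∫ u in (0:ℝ)..(2*π), gfun c u = ∫ u in (-π)..π, gfun c u := by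
    have h := (gfun_periodic c).intervalIntegral_add_eq 0 (-π)
    rw [zero_add, show -π+2*π = π by ring] at h
    exact h
  rw [h1]
  have hsplit : ∫ u in (-π)..π, gfun c u
      = (∫ u in (-π)..(-c), gfun c u) + (∫ u in (-c)..c, gfun c u) + ∫ u in c..π, gfun c u := by
    rw [intervalIntegral.integral_add_adjacent_intervals (hint _ _) (hint _ _),
      intervalIntegral.integral_add_adjacent_intervals (hint _ _) (hint _ _)]
  have hzero1 : ∫ u in (-π)..(-c), gfun c u = 0 := by
    rw [intervalIntegral.integral_congr (g := fun _ => (0:ℝ)) ?_, intervalIntegral.integral_const,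
      smul_zero]
    intro u hu
    rw [Set.uIcc_of_le (by linarith)] at hu
    have h2 : Real.cos u ≤ Real.cos c := by
      rw [← Real.cos_neg u]
      exact Real.cos_le_cos_of_nonneg_of_le_pi hc.le (by linarith [hu.1]) (by linarith [hu.2])
    simp [gfun, max_eq_right, sub_nonpos.mpr h2]
  have hzero2 : ∫ u in c..π, gfun c u = 0 := by
    rw [intervalIntegral.integral_congr (g := fun _ => (0:ℝ)) ?_, intervalIntegral.integral_const,
      smul_zero]
    intro u hu
    rw [Set.uIcc_of_le (by linarith)] at hu
    have h2 : Real.cos u ≤ Real.cos c :=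
      Real.cos_le_cos_of_nonneg_of_le_pi hc.le hu.2 hu.1
    simp [gfun, max_eq_right, sub_nonpos.mpr h2]
  have hmid : ∫ u in (-c)..c, gfun c u = 2*Real.sin c - 2*c*Real.cos c := by
    rw [intervalIntegral.integral_congr (g := fun u => Real.cos u - Real.cos c) ?_]
    · rw [intervalIntegral.integral_sub (Real.continuous_cos.intervalIntegrable _ _)
        (intervalIntegrable_const), integral_cos,
        intervalIntegral.integral_const]
      rw [Real.sin_neg]
      simp [smul_eq_mul]
      ring
    · intro u hu
      rw [Set.uIcc_of_le (by linarith)] at hu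
      have : Real.cos c ≤ Real.cos u :=
        cos_le_of_abs_le c u hc hcπ (abs_le.mpr ⟨hu.1, hu.2⟩)
      simp [gfun, max_eq_left, sub_nonneg.mpr this]
  rw [hsplit, hzero1, hzero2, hmid]
  ring

lemma gfun_shift (c φ : ℝ) :
    ∫ t in (0:ℝ)..(2*π), gfun c (t - φ) = ∫ u in (0:ℝ)..(2*π), gfun c u := by
  rw [intervalIntegral.integral_comp_sub_right (fun u => gfun c u) φ]
  have h := (gfun_periodic c).intervalIntegral_add_eq (0 - φ) 0
  rw [zero_add, show 0 - φ + 2*π = 2*π - φ by ring] at h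
  exact h

lemma sup_le_bound (n : ℕ) (hn : 3 ≤ n) (Φ : Finset ℝ) (hΦ : Φ.Nonempty)
    (hcard : Φ.card ≤ n) :
    ∫ t in (0:ℝ)..(2*π), Φ.sup' hΦ (fun φ => Real.cos (t - φ))
      ≤ 2*(n:ℝ)*Real.sin (π/n) := by
  have hπ := Real.pi_pos
  have hn0 : (0:ℝ) < n := by positivity
  have h3n : (3:ℝ) ≤ (n:ℝ) := by exact_mod_cast hn
  set c : ℝ := π/n with hcdef
  have hc : 0 < c := by positivity
  have hcπ' : c < π/2 := by
    rw [hcdef, div_lt_div_iff₀ hn0 two_pos]; nlinarith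
  have hcπ : c ≤ π/2 := hcπ'.le
  have hnc : (n:ℝ) * c = π := by rw [hcdef]; field_simp
  have hpt : ∀ t : ℝ, Φ.sup' hΦ (fun φ => Real.cos (t - φ))
      ≤ Real.cos c + ∑ φ ∈ Φ, gfun c (t - φ) := by
    intro t
    refine Finset.sup'_le _ _ fun φ hφ => ?_
    have h1 : Real.cos (t - φ) - Real.cos c ≤ gfun c (t - φ) := le_max_left _ _
    have h2 : gfun c (t - φ) ≤ ∑ ψ ∈ Φ, gfun c (t - ψ) :=
      Finset.single_le_sum (fun ψ _ => gfun_nonneg c _) hφ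
    linarith
  have hMcont : Continuous fun t : ℝ => Φ.sup' hΦ (fun φ => Real.cos (t - φ)) :=
    cont_sup' Φ hΦ (fun φ t => Real.cos (t - φ))
      (fun φ => Real.continuous_cos.comp (continuous_id.sub continuous_const))
  have hgs : ∀ φ : ℝ, Continuous fun t : ℝ => gfun c (t - φ) :=
    fun φ => (gfun_cont c).comp (continuous_id.sub continuous_const)
  have hscont : Continuous fun t : ℝ => ∑ φ ∈ Φ, gfun c (t - φ) :=
    continuous_finset_sum _ fun φ _ => hgs φ
  have hRcont : Continuous fun t : ℝ => Real.cos c + ∑ φ ∈ Φ, gfun c (t - φ) :=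
    continuous_const.add hscont
  have hmono := intervalIntegral.integral_mono_on (by positivity : (0:ℝ) ≤ 2*π)
    (Continuous.intervalIntegrable (μ := volume) hMcont _ _)
    (Continuous.intervalIntegrable (μ := volume) hRcont _ _) (fun t _ => hpt t)
  have hRint : ∫ t in (0:ℝ)..(2*π), (Real.cos c + ∑ φ ∈ Φ, gfun c (t - φ))
      = 2*π*Real.cos c + Φ.card * (2*Real.sin c - 2*c*Real.cos c) := by
    rw [intervalIntegral.integral_add intervalIntegrable_const
      (Continuous.intervalIntegrable (μ := volume) hscont _ _),
      intervalIntegral.integral_const,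
      intervalIntegral.integral_finset_sum (fun φ _ =>
        Continuous.intervalIntegrable (μ := volume) (hgs φ) _ _)]
    have hcong : ∀ φ ∈ Φ, (∫ t in (0:ℝ)..(2*π), gfun c (t - φ)) = 2*Real.sin c - 2*c*Real.cos c :=
      fun φ _ => by rw [gfun_shift, gfun_integral c hc hcπ]
    rw [Finset.sum_congr rfl hcong, Finset.sum_const, nsmul_eq_mul, smul_eq_mul]
    ring
  rw [hRint] at hmono
  have hJ : 0 ≤ 2*Real.sin c - 2*c*Real.cos c := by
    have htan := Real.lt_tan hc hcπ'
    have hcos : 0 < Real.cos c := Real.cos_pos_of_mem_Ioo ⟨by linarith, hcπ'⟩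
    rw [Real.tan_eq_sin_div_cos, lt_div_iff₀ hcos] at htan
    nlinarith
  have hk : (Φ.card : ℝ) ≤ (n:ℝ) := Nat.cast_le.mpr hcard
  have hprod : 0 ≤ ((n:ℝ) - Φ.card) * (Real.sin c - c*Real.cos c) :=
    mul_nonneg (by linarith) (by linarith)
  have hfin : 2*π*Real.cos c + (Φ.card:ℝ)*(2*Real.sin c - 2*c*Real.cos c)
      = 2*(n:ℝ)*Real.sin c - 2*(((n:ℝ) - Φ.card)*(Real.sin c - c*Real.cos c)) := by
    rw [← hnc]; ring
  rw [hfin] at hmono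
  linarith [hprod]

lemma cos_comp (c : ℝ) (hc : 0 < c) (hcπ : c ≤ π/2) (n : ℕ) (hnc : (n:ℝ)*c = π)
    (i j : ℕ) (hi1 : 1 ≤ i) (hin : i ≤ n) (hj1 : 1 ≤ j) (hjn : j ≤ n) (t : ℝ)
    (ht1 : 2*(j:ℝ)*c - 2*c ≤ t) (ht2 : t ≤ 2*(j:ℝ)*c) :
    Real.cos (t - (2*(i:ℝ)-1)*c) ≤ Real.cos (t - (2*(j:ℝ)-1)*c) := by
  have hu : |t - (2*(j:ℝ)-1)*c| ≤ c := abs_le.mpr ⟨by nlinarith, by nlinarith⟩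
  have hcu := cos_le_of_abs_le c _ hc hcπ hu
  have hi1' : (1:ℝ) ≤ (i:ℝ) := by exact_mod_cast hi1
  have hin' : (i:ℝ) ≤ (n:ℝ) := by exact_mod_cast hin
  have hj1' : (1:ℝ) ≤ (j:ℝ) := by exact_mod_cast hj1
  have hjn' : (j:ℝ) ≤ (n:ℝ) := by exact_mod_cast hjn
  rcases lt_trichotomy i j with h | h | h
  · have hij : (i:ℝ) + 1 ≤ (j:ℝ) := by exact_mod_cast h
    refine le_trans (cos_window c _ hc hcπ ?_ ?_) hcu
    · nlinarith
    · nlinarith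
  · subst h; exact le_refl _
  · have hij : (j:ℝ) + 1 ≤ (i:ℝ) := by exact_mod_cast h
    rw [← Real.cos_neg (t - (2*(i:ℝ)-1)*c)]
    refine le_trans (cos_window c _ hc hcπ ?_ ?_) hcu
    · nlinarith
    · nlinarith

lemma sup_eq_equally_spaced (n : ℕ) (hn : 3 ≤ n)
    (hΦ : ((Finset.Icc 1 n).image (fun i : ℕ => (2*(i:ℝ)-1)*π/(n:ℝ))).Nonempty) :
    ∫ t in (0:ℝ)..(2*π),
        ((Finset.Icc 1 n).image (fun i : ℕ => (2*(i:ℝ)-1)*π/(n:ℝ))).sup' hΦ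
          (fun φ => Real.cos (t - φ))
      = 2*(n:ℝ)*Real.sin (π/(n:ℝ)) := by
  have hπ := Real.pi_pos
  have hn0 : (0:ℝ) < n := by positivity
  have h3n : (3:ℝ) ≤ (n:ℝ) := by exact_mod_cast hn
  set c : ℝ := π/n with hcdef
  have hc : 0 < c := by positivity
  have hcπ' : c < π/2 := by
    rw [hcdef, div_lt_div_iff₀ hn0 two_pos]; nlinarith
  have hcπ : c ≤ π/2 := hcπ'.le
  have hnc : (n:ℝ) * c = π := by rw [hcdef]; field_simp
  have hφc : ∀ i : ℕ, (2*(i:ℝ)-1)*π/(n:ℝ) = (2*(i:ℝ)-1)*c := fun i => by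
    rw [hcdef]; ring
  set Φ := (Finset.Icc 1 n).image (fun i : ℕ => (2*(i:ℝ)-1)*π/(n:ℝ)) with hΦdef
  set M : ℝ → ℝ := fun t => Φ.sup' hΦ (fun φ => Real.cos (t - φ)) with hMdef
  have hMcont : Continuous M :=
    cont_sup' Φ hΦ (fun φ t => Real.cos (t - φ))
      (fun φ => Real.continuous_cos.comp (continuous_id.sub continuous_const))
  set aseq : ℕ → ℝ := fun k => 2*(k:ℝ)*c with haseq
  have hsum := intervalIntegral.sum_integral_adjacent_intervals
    (a := aseq) (n := n) (f := M) (μ := volume) (fun k _ => hMcont.intervalIntegrable _ _)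
  have ha0 : aseq 0 = 0 := by simp [haseq]
  have han : aseq n = 2*π := by rw [haseq]; simp only []; nlinarith
  rw [ha0, han] at hsum
  rw [← hsum]
  have hterm : ∀ k : ℕ, k < n →
      (∫ t in (aseq k)..(aseq (k+1)), M t) = 2*Real.sin c := by
    intro k hk
    have hak : aseq k = 2*(k:ℝ)*c := rfl
    have hak1 : aseq (k+1) = 2*(k:ℝ)*c + 2*c := by
      rw [haseq]; push_cast; ring
    have hEq : Set.EqOn M (fun t => Real.cos (t - (2*((k:ℝ)+1)-1)*c))
        (Set.uIcc (aseq k) (aseq (k+1))) := by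
      intro t ht
      rw [Set.uIcc_of_le (by rw [hak, hak1]; linarith) ] at ht
      rw [hak, hak1] at ht
      apply le_antisymm
      · refine Finset.sup'_le _ _ fun φ hφ => ?_
        rw [hΦdef] at hφ
        obtain ⟨i, hi, rfl⟩ := Finset.mem_image.mp hφ
        rw [Finset.mem_Icc] at hi
        rw [hφc i]
        have := cos_comp c hc hcπ n hnc i (k+1) hi.1 hi.2 (by omega)
          (by omega) t (by push_cast; linarith [ht.1]) (by push_cast; linarith [ht.2])
        rw [show ((k+1 : ℕ) : ℝ) = (k:ℝ)+1 from by push_cast; ring] at this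
        exact this
      · have hmem : (2*((k:ℝ)+1)-1)*π/(n:ℝ) ∈ Φ := by
          rw [hΦdef]
          refine Finset.mem_image.mpr ⟨k+1, Finset.mem_Icc.mpr ⟨by omega, by omega⟩, ?_⟩
          push_cast; ring
        have := Finset.le_sup' (fun φ => Real.cos (t - φ)) hmem
        calc Real.cos (t - (2*((k:ℝ)+1)-1)*c)
            = Real.cos (t - (2*((k:ℝ)+1)-1)*π/(n:ℝ)) := by rw [show (2*((k:ℝ)+1)-1)*π/(n:ℝ) = (2*((k:ℝ)+1)-1)*c from by rw [hcdef]; ring]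
          _ ≤ M t := this
    rw [intervalIntegral.integral_congr hEq]
    rw [intervalIntegral.integral_comp_sub_right (fun u => Real.cos u) ((2*((k:ℝ)+1)-1)*c)]
    rw [integral_cos, hak, hak1]
    rw [show 2*(k:ℝ)*c + 2*c - (2*((k:ℝ)+1)-1)*c = c by ring,
      show 2*(k:ℝ)*c - (2*((k:ℝ)+1)-1)*c = -c by ring, Real.sin_neg]
    ring
  rw [Finset.sum_congr rfl (fun k hk => hterm k (Finset.mem_range.mp hk)), Finset.sum_const,
    Finset.card_range, nsmul_eq_mul]
  ring

/-- For the uniform distribution on the unit circle with constraint the concentric circle of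
radius `a > 0`: for every `n ≥ 3` the set
`{(a cos((2i-1)π/n), a sin((2i-1)π/n)) : i = 1, …, n}` is an optimal set of `n` points, and the
`n`th constrained quantization error is `Vₙ = a² + 1 - (2an/π) sin(π/n)`. -/
theorem circle_constraint_optimal_n_points (a : ℝ) (ha : 0 < a) (n : ℕ) (hn : 3 ≤ n) :
    IsOptimalNSet circleUniform (Metric.sphere (0 : E2) a) n
      ((fun i : ℕ => cpt (a * Real.cos ((2 * (i : ℝ) - 1) * π / (n : ℝ)))
        (a * Real.sin ((2 * (i : ℝ) - 1) * π / (n : ℝ)))) '' Icc 1 n) ∧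
    cqError circleUniform (Metric.sphere (0 : E2) a) n =
      a ^ 2 + 1 - (2 * a * (n : ℝ) / π) * Real.sin (π / (n : ℝ)) := by
  have hπ := Real.pi_pos
  have hn1 : 1 ≤ n := by omega
  set V : ℝ := a ^ 2 + 1 - (2 * a * (n : ℝ) / π) * Real.sin (π / (n : ℝ)) with hVdef
  set Φn : Finset ℝ := (Finset.Icc 1 n).image (fun i : ℕ => (2*(i:ℝ)-1)*π/(n:ℝ)) with hΦndef
  have hΦn : Φn.Nonempty :=
    ⟨_, Finset.mem_image_of_mem _ (Finset.mem_Icc.mpr ⟨le_refl 1, hn1⟩)⟩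
  set αn : Set E2 := (fun i : ℕ => cpt (a * Real.cos ((2 * (i : ℝ) - 1) * π / (n : ℝ)))
      (a * Real.sin ((2 * (i : ℝ) - 1) * π / (n : ℝ)))) '' Icc 1 n with hαndef
  have hαn : αn = spt a '' (↑Φn : Set ℝ) := by
    rw [hαndef, hΦndef, Finset.coe_image, Finset.coe_Icc, ← Set.image_comp]
    rfl
  have hsub : αn ⊆ Metric.sphere (0 : E2) a := by
    rw [hαn]
    rintro p ⟨φ, _, rfl⟩
    exact spt_mem_sphere a φ ha
  have hfin : αn.Finite := (Set.finite_Icc 1 n).image _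
  have hne : αn.Nonempty := ⟨_, Set.mem_image_of_mem _ (Set.mem_Icc.mpr ⟨le_refl 1, hn1⟩)⟩
  have hcard1 : 1 ≤ αn.ncard := (Set.ncard_pos hfin).mpr hne
  have hcardn : αn.ncard ≤ n := by
    have h1 : αn.ncard ≤ (Set.Icc 1 n).ncard := Set.ncard_image_le (Set.finite_Icc 1 n)
    have h2 : (Set.Icc 1 n).ncard = n := by
      rw [← Finset.coe_Icc, Set.ncard_coe_finset, Nat.card_Icc]
      omega
    omega
  have hdist : cDistortion circleUniform αn = V := by
    rw [hαn, distortion_formula a ha Φn hΦn, sup_eq_equally_spaced n hn hΦn, hVdef]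
    ring
  have hlow : ∀ β : Set E2, β ⊆ Metric.sphere (0 : E2) a → β.Finite → 1 ≤ β.ncard →
      β.ncard ≤ n → V ≤ cDistortion circleUniform β := by
    intro β hβsub hβfin hβ1 hβn
    classical
    set θ : E2 → ℝ := fun p => if h : ∃ φ, p = spt a φ then h.choose else 0 with hθdef
    have hθ : ∀ p ∈ β, spt a (θ p) = p := by
      intro p hp
      have h : ∃ φ, p = spt a φ := mem_sphere_exists a ha p (hβsub hp)
      rw [hθdef]
      simp only [dif_pos h]
      exact h.choose_spec.symm
    set Φ : Finset ℝ := hβfin.toFinset.image θ with hΦdef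
    have himg : spt a '' (↑Φ : Set ℝ) = β := by
      rw [hΦdef, Finset.coe_image, Set.Finite.coe_toFinset, ← Set.image_comp]
      have : Set.EqOn (spt a ∘ θ) id β := fun p hp => hθ p hp
      rw [Set.image_congr this, Set.image_id]
    have hΦcard : Φ.card ≤ n := by
      have h1 : Φ.card ≤ hβfin.toFinset.card := Finset.card_image_le
      have h2 : hβfin.toFinset.card = β.ncard := (Set.ncard_eq_toFinset_card β hβfin).symm
      omega
    have hΦne : Φ.Nonempty := by
      obtain ⟨p, hp⟩ := (Set.ncard_pos hβfin).mp hβ1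
      exact ⟨θ p, Finset.mem_image_of_mem θ ((Set.Finite.mem_toFinset hβfin).mpr hp)⟩
    have hbound := sup_le_bound n hn Φ hΦne hΦcard
    rw [← himg, distortion_formula a ha Φ hΦne, hVdef]
    have haπ : 0 < a / π := by positivity
    have h2 := mul_le_mul_of_nonneg_left hbound haπ.le
    have heq : a/π * (2*(n:ℝ)*Real.sin (π/(n:ℝ))) = 2*a*(n:ℝ)/π*Real.sin (π/(n:ℝ)) := by ring
    linarith
  set Sv : Set ℝ := {v : ℝ | ∃ α : Set E2, α ⊆ Metric.sphere (0 : E2) a ∧ α.Finite ∧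
      1 ≤ α.ncard ∧ α.ncard ≤ n ∧ v = cDistortion circleUniform α} with hSvdef
  have hmem : V ∈ Sv := ⟨αn, hsub, hfin, hcard1, hcardn, hdist.symm⟩
  have hlb : ∀ v ∈ Sv, V ≤ v := by
    rintro v ⟨β, h1, h2, h3, h4, rfl⟩
    exact hlow β h1 h2 h3 h4
  have hcq : cqError circleUniform (Metric.sphere (0 : E2) a) n = V := by
    rw [cqError]
    exact le_antisymm (csInf_le ⟨V, hlb⟩ hmem) (le_csInf ⟨V, hmem⟩ hlb)
  exact ⟨⟨hsub, hfin, hcard1, hcardn, by rw [hdist, hcq]⟩, hcq⟩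
end
end

section
/- Let V_n = (36n² + 49n − 144)/(12n³) for n ≥ 2 (the nth constrained quantization error for the uniform distribution on {(x,0) : 0 ≤ x ≤ 2} with constraint the segment of y = √3·x between (0,0) and (2, 2√3)). Then V_n converges to V_∞ = 0 as n → ∞, the constrained quantization dimension lim_{n→∞} 2·log n / (−log(V_n − V_∞)) equals 2, and the 2-dimensional constrained quantization coefficient lim_{n→∞} n·(V_n − V_∞) equals 3. -/
open Filter Real Topology

/-! A positive finite coefficient `nᵃ Vₙ → C` forces `Vₙ → 0` and `-log Vₙ = a log n + O(1)`,
hence `log n / (-log Vₙ) → 1 / a`. For the explicit `Vₙ` one has `n Vₙ → 36 / 12 = 3`, which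
gives the coefficient `3` and, with `a = 2 / κ = 1`, the dimension `κ = 2`. -/

section RateOfConvergence

variable {V : ℕ → ℝ} {a C : ℝ}

lemma tendsto_zero_of_tendsto_rpow_mul (ha : 0 < a)
    (h : Tendsto (fun n : ℕ => (n : ℝ) ^ a * V n) atTop (𝓝 C)) :
    Tendsto V atTop (𝓝 0) := by
  have hdecay : Tendsto (fun n : ℕ => (n : ℝ) ^ (-a)) atTop (𝓝 0) :=
    (tendsto_rpow_neg_atTop ha).comp tendsto_natCast_atTop_atTop
  have hprod := hdecay.mul h
  rw [zero_mul] at hprod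
  refine hprod.congr' ?_
  filter_upwards [eventually_gt_atTop 0] with n hn
  rw [← mul_assoc, ← rpow_add (by positivity), neg_add_cancel, rpow_zero, one_mul]

lemma tendsto_log_div_neg_log_of_tendsto_rpow_mul (ha : 0 < a) (hC : 0 < C)
    (h : Tendsto (fun n : ℕ => (n : ℝ) ^ a * V n) atTop (𝓝 C)) :
    Tendsto (fun n : ℕ => log n / -log (V n)) atTop (𝓝 a⁻¹) := by
  have hlog_n : Tendsto (fun n : ℕ => log n) atTop atTop :=
    tendsto_log_atTop.comp tendsto_natCast_atTop_atTop
  have hbounded : Tendsto (fun n : ℕ => log ((n : ℝ) ^ a * V n) / log n) atTop (𝓝 0) :=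
    ((continuousAt_log hC.ne').tendsto.comp h).div_atTop hlog_n
  have hlim : Tendsto (fun n : ℕ => (a - log ((n : ℝ) ^ a * V n) / log n)⁻¹) atTop (𝓝 a⁻¹) := by
    simpa using (tendsto_const_nhds.sub hbounded).inv₀ (by simpa using ha.ne')
  refine hlim.congr' ?_
  filter_upwards [h.eventually (lt_mem_nhds hC), eventually_ge_atTop 2] with n hpos hn
  have hn0 : (0 : ℝ) < n := by positivity
  have hVpos : 0 < V n := pos_of_mul_pos_right hpos (by positivity)
  have hlog_pos : 0 < log n := log_pos (by exact_mod_cast hn)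
  rw [log_mul (by positivity) hVpos.ne', log_rpow hn0]
  field_simp
  ring

lemma tendsto_two_mul_log_div_neg_log_of_tendsto_rpow_mul {κ : ℝ} (hκ : 0 < κ) (hC : 0 < C)
    (h : Tendsto (fun n : ℕ => (n : ℝ) ^ (2 / κ) * V n) atTop (𝓝 C)) :
    Tendsto (fun n : ℕ => 2 * log n / -log (V n)) atTop (𝓝 κ) := by
  have := (tendsto_log_div_neg_log_of_tendsto_rpow_mul (by positivity) hC h).const_mul 2
  simp only [inv_div, mul_div_cancel₀ κ two_ne_zero] at this
  simpa only [mul_div_assoc] using this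

end RateOfConvergence

lemma tendsto_natCast_mul_segment_error :
    Tendsto (fun n : ℕ => (n : ℝ) * ((36 * (n : ℝ) ^ 2 + 49 * (n : ℝ) - 144) / (12 * (n : ℝ) ^ 3)))
      atTop (𝓝 3) := by
  have hinv : Tendsto (fun n : ℕ => (n : ℝ)⁻¹) atTop (𝓝 0) :=
    tendsto_inv_atTop_zero.comp tendsto_natCast_atTop_atTop
  have hlim : Tendsto (fun n : ℕ => (36 + 49 * (n : ℝ)⁻¹ - 144 * ((n : ℝ)⁻¹ * (n : ℝ)⁻¹)) / 12)
      atTop (𝓝 3) := by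
    have := ((tendsto_const_nhds (x := (36 : ℝ))).add (hinv.const_mul 49)).sub
      ((hinv.mul hinv).const_mul 144) |>.div_const 12
    norm_num at this
    exact this
  refine hlim.congr' ?_
  filter_upwards [eventually_gt_atTop 0] with n hn
  have : (n : ℝ) ≠ 0 := by positivity
  field_simp

/-- For `Vₙ = (36n² + 49n - 144)/(12n³)` (the `n`th constrained quantization error for the
uniform distribution on `{(x,0) : 0 ≤ x ≤ 2}` with constraint the segment of `y = √3 x` between
`(0,0)` and `(2, 2√3)`): `Vₙ → V_∞ = 0`, the constrained quantization dimension
`lim 2 log n / (-log(Vₙ - V_∞))` equals `2`, and the `2`-dimensional constrained quantization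
coefficient `lim n (Vₙ - V_∞)` equals `3`. -/
theorem constrained_dimension_coefficient_segment_sqrt_three :
    ∀ V : ℕ → ℝ,
      (V = fun n : ℕ => (36 * (n : ℝ) ^ 2 + 49 * (n : ℝ) - 144) / (12 * (n : ℝ) ^ 3)) →
      Tendsto V atTop (nhds 0) ∧
      Tendsto (fun n : ℕ => 2 * Real.log n / (-Real.log (V n - 0))) atTop (nhds 2) ∧
      Tendsto (fun n : ℕ => (n : ℝ) * (V n - 0)) atTop (nhds 3) := by
  rintro V rfl
  have hcoef : Tendsto (fun n : ℕ => (n : ℝ) ^ (2 / 2 : ℝ) *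
      ((36 * (n : ℝ) ^ 2 + 49 * (n : ℝ) - 144) / (12 * (n : ℝ) ^ 3))) atTop (𝓝 3) := by
    simpa using tendsto_natCast_mul_segment_error
  simp only [sub_zero]
  exact ⟨tendsto_zero_of_tendsto_rpow_mul (by norm_num) hcoef,
    tendsto_two_mul_log_div_neg_log_of_tendsto_rpow_mul two_pos three_pos hcoef,
    tendsto_natCast_mul_segment_error⟩
end
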